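/- Let H be a Hopf algebra over a field k. For any left H-modules M and N, the projective dimension satisfies pd_H(M ⊗_k N) ≤ pd_H(M). If moreover the antipode of H is bijective, then also pd_H(M ⊗_k N) ≤ pd_H(N). -/

import Mathlib

open TensorProduct

universe u

noncomputable section GorensteinCore

/-- `ProjDimLE R n M` : the left `R`-module `M` has a projective resolution of length `≤ n`. -/
def ProjDimLE (R : Type u) [Ring R] : ℕ → (M : Type u) → [AddCommGroup M] → [Module R M] → Prop
  | 0, M, _, _ => Module.Projective R M
  | (n+1), M, _, _ => Module.Projective R M ∨
      ∃ (P : ModuleCat.{u} R) (f : P →ₗ[R] M), Module.Projective R P ∧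
      Function.Surjective f ∧ ProjDimLE R n (LinearMap.ker f)

/-- The projective dimension of a module, as an element of `ℕ∞` (`⊤` = infinite). -/
def projDim (R : Type u) [Ring R] (M : Type u) [AddCommGroup M] [Module R M] : ℕ∞ :=
  sInf {n : ℕ∞ | ∃ m : ℕ, n = (m : ℕ∞) ∧ ProjDimLE R m M}

/-- A module is Gorenstein projective if it is a syzygy of a totally acyclic complex of
projective modules. -/
def IsGorensteinProjective (R : Type u) [Ring R] (M : Type u) [AddCommGroup M] [Module R M] :
    Prop :=
  ∃ (P : ℤ → ModuleCat.{u} R) (d : ∀ i : ℤ, P (i+1) →ₗ[R] P i),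
    (∀ i, Module.Projective R (P i)) ∧
    (∀ i, LinearMap.range (d (i+1)) = LinearMap.ker (d i)) ∧
    (∀ (Q : ModuleCat.{u} R), Module.Projective R Q →
      ∀ (i : ℤ) (f : P (i+1) →ₗ[R] Q), f.comp (d (i+1)) = 0 →
        ∃ g : P i →ₗ[R] Q, g.comp (d i) = f) ∧
    Nonempty (M ≃ₗ[R] LinearMap.ker (d 0))

/-- `GProjDimLE R n M` : `M` has a Gorenstein projective resolution of length `≤ n`. -/
def GProjDimLE (R : Type u) [Ring R] : ℕ → (M : Type u) → [AddCommGroup M] → [Module R M] → Prop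
  | 0, M, _, _ => IsGorensteinProjective R M
  | (n+1), M, _, _ => IsGorensteinProjective R M ∨
      ∃ (G : ModuleCat.{u} R) (f : G →ₗ[R] M), IsGorensteinProjective R G ∧
      Function.Surjective f ∧ GProjDimLE R n (LinearMap.ker f)

/-- The Gorenstein projective dimension of a module, as an element of `ℕ∞`. -/
def gProjDim (R : Type u) [Ring R] (M : Type u) [AddCommGroup M] [Module R M] : ℕ∞ :=
  sInf {n : ℕ∞ | ∃ m : ℕ, n = (m : ℕ∞) ∧ GProjDimLE R m M}

/-- The (left) Gorenstein global dimension of a ring `R`. -/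
def lGgldim (R : Type u) [Ring R] : ℕ∞ :=
  ⨆ M : ModuleCat.{u} R, gProjDim R M

/-- The (left) global dimension of a ring `R`. -/
def lgldim (R : Type u) [Ring R] : ℕ∞ :=
  ⨆ M : ModuleCat.{u} R, projDim R M

/-- `InjDimLE R n M` : the left `R`-module `M` has an injective resolution of length `≤ n`. -/
def InjDimLE (R : Type u) [Ring R] : ℕ → (M : Type u) → [AddCommGroup M] → [Module R M] → Prop
  | 0, M, _, _ => Module.Injective R M
  | (n+1), M, _, _ => Module.Injective R M ∨
      ∃ (I : ModuleCat.{u} R) (f : M →ₗ[R] I), Module.Injective R I ∧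
      Function.Injective f ∧ InjDimLE R n (I ⧸ LinearMap.range f)

/-- The injective dimension of a module, as an element of `ℕ∞`. -/
def injDim (R : Type u) [Ring R] (M : Type u) [AddCommGroup M] [Module R M] : ℕ∞ :=
  sInf {n : ℕ∞ | ∃ m : ℕ, n = (m : ℕ∞) ∧ InjDimLE R m M}

/-- `silp R` : the supremum of the injective dimensions of projective left `R`-modules. -/
def silp (R : Type u) [Ring R] : ℕ∞ :=
  ⨆ (M : ModuleCat.{u} R) (_ : Module.Projective R M), injDim R M

/-- `spli R` : the supremum of the projective dimensions of injective left `R`-modules. -/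
def spli (R : Type u) [Ring R] : ℕ∞ :=
  ⨆ (M : ModuleCat.{u} R) (_ : Module.Injective R M), projDim R M

end GorensteinCore
noncomputable section HopfCore

variable (k : Type u) [CommRing k] (H : Type u) [Ring H] [HopfAlgebra k H]

/-- The trivial left `H`-module structure on `k`, given by the counit. -/
def trivModule : Module H k :=
  Module.compHom k ((Bialgebra.counitAlgHom k H : H →ₐ[k] k) : H →+* k)

/-- The trivial left `H`-module `εk`, as an object of `ModuleCat H`. -/
def trivMod : ModuleCat.{u} H :=
  @ModuleCat.of H _ k _ (trivModule k H)

/-- The counit of `H`, as a ring homomorphism out of `Hᵐᵒᵖ`. -/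
def counitOp : Hᵐᵒᵖ →+* k :=
  RingHom.fromOpposite ((Bialgebra.counitAlgHom k H : H →ₐ[k] k) : H →+* k)
    (fun _ _ => mul_comm _ _)

/-- The trivial right `H`-module structure on `k` (as a left `Hᵐᵒᵖ`-module). -/
def trivModuleOp : Module Hᵐᵒᵖ k :=
  Module.compHom k (counitOp k H)

/-- The trivial right `H`-module `k_ε`, as an object of `ModuleCat Hᵐᵒᵖ`. -/
def trivModOp : ModuleCat.{u} Hᵐᵒᵖ :=
  @ModuleCat.of Hᵐᵒᵖ _ k _ (trivModuleOp k H)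

section TensorAction

variable (M N : Type u) [AddCommGroup M] [Module k M] [Module H M]
  [IsScalarTower k H M] [SMulCommClass k H M]
  [AddCommGroup N] [Module k N] [Module H N] [IsScalarTower k H N] [SMulCommClass k H N]

/-- The representation of `H` on a left `H`-module `M`, as an algebra morphism to
`End_k(M)`. -/
def hRep : H →ₐ[k] Module.End k M :=
  (Algebra.lsmul k k M : H →ₐ[k] Module.End k M)

/-- The representation of `H` on `M ⊗[k] N` given by the comultiplication of `H`:
`h • (m ⊗ n) = ∑ h₁ • m ⊗ h₂ • n`. -/
def tensorRep : H →ₐ[k] Module.End k (M ⊗[k] N) :=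
  ((Module.endTensorEndAlgHom (R := k) (S := k) (A := k) (M := M) (N := N)).comp
    (Algebra.TensorProduct.map (hRep k H M) (hRep k H N))).comp
    (Bialgebra.comulAlgHom k H)

/-- The diagonal left `H`-module structure on `M ⊗[k] N`:
`h • (m ⊗ n) = ∑ h₁ • m ⊗ h₂ • n`. -/
def tensorModule : Module H (M ⊗[k] N) :=
  Module.compHom (M ⊗[k] N)
    ((tensorRep k H M N).toRingHom : H →+* Module.End k (M ⊗[k] N))

/-- The tensor product `M ⊗[k] N` with its diagonal left `H`-module structure, as an
object of `ModuleCat H`. -/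
def tensorMod : ModuleCat.{u} H :=
  @ModuleCat.of H _ (M ⊗[k] N) _ (tensorModule k H M N)

end TensorAction

end HopfCore


/-!
The fusion map `H ⊗ N → H ⊗ N`, `h ⊗ n ↦ ∑ h₁ ⊗ h₂ n`, is `H`-linear from the free module `H ⊗ N`
to the diagonal module, and it is bijective with inverse `h ⊗ n ↦ ∑ h₁ ⊗ S(h₂) n`: both are
"twists" `h ⊗ n ↦ ∑ h₁ ⊗ u(h₂) n`, and twisting turns convolution of the `u`'s into composition.
If `M` is projective it is a retract of `H ⊗ M`, so `M ⊗ N` is a retract of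
`(H ⊗ M) ⊗ N ≅ (H ⊗ N) ⊗ M`, which the fusion map identifies with the free module `H ⊗ (N ⊗ M)`.
Over a field `- ⊗ N` is exact, so it turns a projective resolution of `M` into one of `M ⊗ N` of
the same length.

For the second inequality, `M ⊗ N ≅ N ⊗ M` when the right-hand side carries the diagonal action
through the co-opposite comultiplication `τ ∘ Δ`; its fusion map is a twist over the co-opposite
coalgebra, inverted by `S⁻¹` when `S` is bijective, and the first argument applies verbatim.
-/

open Coalgebra WithConv

noncomputable section

section ProjDim

variable {R : Type u} [Ring R]

theorem ProjDimLE.of_linearEquiv {X Y : Type u} [AddCommGroup X] [Module R X] [AddCommGroup Y]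
    [Module R Y] (e : X ≃ₗ[R] Y) {n : ℕ} (hX : ProjDimLE R n X) : ProjDimLE R n Y := by
  induction n generalizing X Y with
  | zero =>
    have : Module.Projective R X := hX
    exact .of_equiv e
  | succ n ih =>
    rcases hX with hX | ⟨P, f, hP, hf, hker⟩
    · have : Module.Projective R X := hX
      exact .inl (.of_equiv e)
    · exact .inr ⟨P, e.toLinearMap ∘ₗ f, hP, e.surjective.comp hf,
        ih (.ofEq _ _ (LinearEquiv.ker_comp e f).symm) hker⟩

theorem projDim_le_of_forall_projDimLE {X Y : Type u} [AddCommGroup X] [Module R X]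
    [AddCommGroup Y] [Module R Y] (h : ∀ n, ProjDimLE R n X → ProjDimLE R n Y) :
    projDim R Y ≤ projDim R X :=
  sInf_le_sInf fun _ ⟨n, hn, hX⟩ ↦ ⟨n, hn, h n hX⟩

theorem projDim_congr {X Y : Type u} [AddCommGroup X] [Module R X] [AddCommGroup Y] [Module R Y]
    (e : X ≃ₗ[R] Y) : projDim R X = projDim R Y :=
  le_antisymm (projDim_le_of_forall_projDimLE fun _ ↦ .of_linearEquiv e.symm)
    (projDim_le_of_forall_projDimLE fun _ ↦ .of_linearEquiv e)

end ProjDim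

def Cop (C : Type*) : Type _ := C

namespace Cop

variable (k : Type*) [CommRing k] {C : Type*} [AddCommGroup C] [Module k C]

instance : AddCommGroup (Cop C) := inferInstanceAs (AddCommGroup C)
instance : Module k (Cop C) := inferInstanceAs (Module k C)

def opEquiv : C ≃ₗ[k] Cop C := LinearEquiv.refl k C

variable [Coalgebra k C]

instance : CoalgebraStruct k (Cop C) where
  comul := map (opEquiv k).toLinearMap (opEquiv k).toLinearMap ∘ₗ
    (TensorProduct.comm k C C).toLinearMap ∘ₗ comul ∘ₗ (opEquiv k).symm.toLinearMap
  counit := counit ∘ₗ (opEquiv k).symm.toLinearMap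

variable {k}

lemma comul_opEquiv (c : C) : comul (R := k) (opEquiv k c) =
    map (opEquiv k).toLinearMap (opEquiv k).toLinearMap (TensorProduct.comm k C C (comul c)) :=
  rfl

lemma counit_opEquiv (c : C) : counit (R := k) (opEquiv k c) = counit (R := k) c := rfl

def _root_.Coalgebra.Repr.cop {c : C} {ι : Type*} (r : Repr k c ι) : Repr k (opEquiv k c) ι where
  index := r.index
  left := opEquiv k ∘ r.right
  right := opEquiv k ∘ r.left
  eq := by simp [comul_opEquiv, ← r.eq, map_sum]

instance : Coalgebra k (Cop C) where
  coassoc := by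
    ext c
    obtain ⟨c, rfl⟩ := (opEquiv k).surjective c
    let r := ℛ k c
    -- the coassociativity of `C`, with the three tensor factors reversed
    have h := congr(map (opEquiv k).toLinearMap
      (map (opEquiv k).toLinearMap (opEquiv k).toLinearMap)
      ((TensorProduct.comm k C (C ⊗[k] C) ≪≫ₗ
        TensorProduct.congr (TensorProduct.comm k C C) (LinearEquiv.refl k C) ≪≫ₗ
        TensorProduct.assoc k C C C)
      $(sum_tmul_tmul_eq r (fun i ↦ ℛ k (r.left i)) (fun i ↦ ℛ k (r.right i)))))
    simp only [map_sum, LinearEquiv.trans_apply, comm_tmul, congr_tmul, assoc_tmul,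
      LinearEquiv.refl_apply, map_tmul, LinearEquiv.coe_coe] at h
    simp only [LinearMap.comp_apply, LinearEquiv.coe_coe, ← r.cop.eq, map_sum,
      LinearMap.rTensor_tmul, LinearMap.lTensor_tmul, Repr.cop, Function.comp_apply,
      ← (ℛ k (r.left _)).cop.eq, ← (ℛ k (r.right _)).cop.eq, sum_tmul, tmul_sum, assoc_tmul]
    exact h.symm
  rTensor_counit_comp_comul := by
    ext c
    obtain ⟨c, rfl⟩ := (opEquiv k).surjective c
    have h := congr(TensorProduct.comm k (Cop C) k
      (map (opEquiv k).toLinearMap LinearMap.id $(sum_tmul_counit_eq (R := k) (ℛ k c))))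
    simp only [map_sum, map_tmul, comm_tmul, LinearMap.id_coe, id_eq, LinearEquiv.coe_coe] at h
    simpa [← (ℛ k c).cop.eq, Repr.cop, map_sum, counit_opEquiv] using h
  lTensor_counit_comp_comul := by
    ext c
    obtain ⟨c, rfl⟩ := (opEquiv k).surjective c
    have h := congr(TensorProduct.comm k k (Cop C)
      (map LinearMap.id (opEquiv k).toLinearMap $(sum_counit_tmul_eq (R := k) (ℛ k c))))
    simp only [map_sum, map_tmul, comm_tmul, LinearMap.id_coe, id_eq, LinearEquiv.coe_coe] at h
    simpa [← (ℛ k c).cop.eq, Repr.cop, map_sum, counit_opEquiv] using h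

end Cop

section Twist

variable {k : Type*} [CommRing k] {C : Type*} [AddCommGroup C] [Module k C] [Coalgebra k C]
  {A : Type*} [Ring A] [Algebra k A]
  (N : Type*) [AddCommGroup N] [Module k N] [Module A N] [IsScalarTower k A N]

def twist (u : C →ₗ[k] A) : Module.End k (C ⊗[k] N) :=
  (TensorProduct.lift ((Algebra.lsmul k k N).toLinearMap ∘ₗ u)).lTensor C ∘ₗ
    (TensorProduct.assoc k C C N).toLinearMap ∘ₗ comul.rTensor N

variable {N}

lemma twist_tmul (u : C →ₗ[k] A) {c : C} {ι : Type*} (r : Repr k c ι) (n : N) :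
    twist N u (c ⊗ₜ n) = ∑ i ∈ r.index, r.left i ⊗ₜ (u (r.right i) • n) := by
  simp [twist, ← r.eq, sum_tmul, map_sum]

lemma twist_one : twist N (1 : WithConv (C →ₗ[k] A)).ofConv = 1 := by
  refine TensorProduct.ext' fun c n ↦ ?_
  have h := congr(TensorProduct.rid k C $(sum_tmul_counit_eq (R := k) (ℛ k c)))
  simp only [map_sum, rid_tmul, one_smul] at h
  simp only [twist_tmul _ (ℛ k c), LinearMap.convOne_apply, algebraMap_smul, Module.End.one_apply]
  simp_rw [← smul_tmul, ← sum_tmul, h]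

lemma twist_mul (u v : WithConv (C →ₗ[k] A)) :
    twist N (u * v).ofConv = twist N u.ofConv * twist N v.ofConv := by
  refine TensorProduct.ext' fun c n ↦ ?_
  let r := ℛ k c
  let γ : C ⊗[k] C →ₗ[k] N := (Algebra.lsmul k k N).toLinearMap.flip n ∘ₗ
    LinearMap.mul' k A ∘ₗ TensorProduct.map u.ofConv v.ofConv
  have h := congr(γ.lTensor C
    $(sum_tmul_tmul_eq r (fun i ↦ ℛ k (r.left i)) (fun i ↦ ℛ k (r.right i))))
  simp only [map_sum, LinearMap.lTensor_tmul, γ, LinearMap.coe_comp, Function.comp_apply,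
    map_tmul, LinearMap.mul'_apply, LinearMap.flip_apply, AlgHom.toLinearMap_apply,
    Algebra.lsmul_coe] at h
  simp only [Module.End.mul_apply, twist_tmul _ r, map_sum, twist_tmul _ (ℛ k (r.left _)),
    (ℛ k (r.right _)).convMul_apply, Finset.sum_smul, tmul_sum, mul_smul] at h ⊢
  exact h.symm

variable (N) in
def twistHom : WithConv (C →ₗ[k] A) →* Module.End k (C ⊗[k] N) where
  toFun u := twist N u.ofConv
  map_one' := twist_one
  map_mul' := twist_mul

theorem bijective_twist {u : C →ₗ[k] A} (hu : IsUnit (toConv u)) :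
    Function.Bijective (twist N u) :=
  (Module.End.isUnit_iff _).1 (hu.map (twistHom N))

end Twist

section Diagonal

variable {k : Type*} [CommRing k] {H : Type*} [Ring H] [Algebra k H] {Δ : H →ₐ[k] H ⊗[k] H}
  {M N : Type*} [AddCommGroup M] [Module k M] [Module H M] [IsScalarTower k H M]
  [AddCommGroup N] [Module k N] [Module H N] [IsScalarTower k H N]

variable (M N) in
def tensorEndRep : H ⊗[k] H →ₐ[k] Module.End k (M ⊗[k] N) :=
  (Module.endTensorEndAlgHom (R := k) (S := k) (A := k) (M := M) (N := N)).comp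
    (Algebra.TensorProduct.map (Algebra.lsmul k k M) (Algebra.lsmul k k N))

@[simp] lemma tensorEndRep_tmul (a b : H) (m : M) (n : N) :
    tensorEndRep M N (a ⊗ₜ[k] b) (m ⊗ₜ n) = (a • m) ⊗ₜ (b • n) := by
  simp [tensorEndRep, Module.endTensorEndAlgHom_apply]

/-- For `Δ = Bialgebra.comulAlgHom k H` the module structure is, by definition,
`tensorModule k H M N`. -/
def DiagTensor (_Δ : H →ₐ[k] H ⊗[k] H) (M N : Type*) [AddCommGroup M] [Module k M]
    [AddCommGroup N] [Module k N] : Type _ :=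
  M ⊗[k] N

namespace DiagTensor

instance : AddCommGroup (DiagTensor Δ M N) := inferInstanceAs (AddCommGroup (M ⊗[k] N))
instance : Module k (DiagTensor Δ M N) := inferInstanceAs (Module k (M ⊗[k] N))
instance : Module H (DiagTensor Δ M N) :=
  Module.compHom (M ⊗[k] N) ((tensorEndRep M N).comp Δ).toRingHom

variable (Δ) in
def of : M ⊗[k] N ≃ₗ[k] DiagTensor Δ M N := LinearEquiv.refl k _

lemma smul_of (h : H) (x : M ⊗[k] N) : h • of Δ x = of Δ (tensorEndRep M N (Δ h) x) := rfl

instance : IsScalarTower k H (DiagTensor Δ M N) where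
  smul_assoc c h x := by
    obtain ⟨x, rfl⟩ := (of Δ).surjective x
    simp only [smul_of, map_smul]
    rfl

def linearMapOfTmul {Z : Type*} [AddCommGroup Z] [Module k Z] [Module H Z]
    (ρ : H ⊗[k] H →ₗ[k] Module.End k Z) (hρ : ∀ (h : H) (z : Z), h • z = ρ (Δ h) z)
    (g : M ⊗[k] N →ₗ[k] Z)
    (hg : ∀ (a b : H) (m : M) (n : N), g ((a • m) ⊗ₜ (b • n)) = ρ (a ⊗ₜ b) (g (m ⊗ₜ n))) :
    DiagTensor Δ M N →ₗ[H] Z where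
  toFun := g ∘ (of Δ).symm
  map_add' := by simp
  map_smul' h x := by
    have hg' (y : H ⊗[k] H) (x : M ⊗[k] N) : g (tensorEndRep M N y x) = ρ y (g x) := by
      induction y using TensorProduct.induction_on with
      | zero => simp
      | add y y' hy hy' => simp only [map_add, LinearMap.add_apply, hy, hy']
      | tmul a b =>
        induction x using TensorProduct.induction_on with
        | zero => simp
        | add x x' hx hx' => simp only [map_add, hx, hx']
        | tmul m n => rw [tensorEndRep_tmul, hg]
    obtain ⟨x, rfl⟩ := (of Δ).surjective x
    simp [smul_of, hg', hρ]

lemma linearMapOfTmul_of {Z : Type*} [AddCommGroup Z] [Module k Z] [Module H Z]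
    (ρ : H ⊗[k] H →ₗ[k] Module.End k Z) (hρ : ∀ (h : H) (z : Z), h • z = ρ (Δ h) z)
    (g : M ⊗[k] N →ₗ[k] Z) (hg) (x : M ⊗[k] N) :
    linearMapOfTmul ρ hρ g hg (of Δ x) = g x := by
  simp [linearMapOfTmul]

def linearEquivOfTmul {Z : Type*} [AddCommGroup Z] [Module k Z] [Module H Z]
    (ρ : H ⊗[k] H →ₗ[k] Module.End k Z) (hρ : ∀ (h : H) (z : Z), h • z = ρ (Δ h) z)
    (e : M ⊗[k] N ≃ₗ[k] Z)
    (he : ∀ (a b : H) (m : M) (n : N), e ((a • m) ⊗ₜ (b • n)) = ρ (a ⊗ₜ b) (e (m ⊗ₜ n))) :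
    DiagTensor Δ M N ≃ₗ[H] Z :=
  .ofBijective (linearMapOfTmul ρ hρ e.toLinearMap he) ((of Δ).symm.trans e).bijective

section RTensor

variable {M' M'' : Type*} [AddCommGroup M'] [Module k M'] [Module H M'] [IsScalarTower k H M']
  [AddCommGroup M''] [Module k M''] [Module H M''] [IsScalarTower k H M'']

variable (Δ N) in
def rTensor (f : M →ₗ[H] M') : DiagTensor Δ M N →ₗ[H] DiagTensor Δ M' N :=
  linearMapOfTmul ((of Δ).conj.toLinearMap ∘ₗ (tensorEndRep M' N).toLinearMap) (fun _ _ ↦ rfl)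
    ((of Δ).toLinearMap ∘ₗ (f.restrictScalars k).rTensor N) fun a b m n ↦ by
      simp [LinearEquiv.conj_apply_apply]

lemma rTensor_of (f : M →ₗ[H] M') (x : M ⊗[k] N) :
    rTensor Δ N f (of Δ x) = of Δ ((f.restrictScalars k).rTensor N x) :=
  linearMapOfTmul_of _ _ _ _ _

lemma rTensor_comp (f : M' →ₗ[H] M'') (g : M →ₗ[H] M') :
    rTensor Δ N (f ∘ₗ g) = rTensor Δ N f ∘ₗ rTensor Δ N g := by
  ext x
  obtain ⟨x, rfl⟩ := (of Δ).surjective x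
  simp [rTensor_of, LinearMap.rTensor_comp_apply]

lemma rTensor_id : rTensor Δ N (LinearMap.id : M →ₗ[H] M) = LinearMap.id := by
  ext x
  obtain ⟨x, rfl⟩ := (of Δ).surjective x
  simp [rTensor_of]

end RTensor

def swapComul (Δ : H →ₐ[k] H ⊗[k] H) : H →ₐ[k] H ⊗[k] H :=
  (Algebra.TensorProduct.comm k H H).toAlgHom.comp Δ

variable (Δ M N) in
def comm : DiagTensor Δ M N ≃ₗ[H] DiagTensor (swapComul Δ) N M :=
  linearEquivOfTmul ((of _).conj.toLinearMap ∘ₗ (tensorEndRep N M).toLinearMap ∘ₗ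
      (TensorProduct.comm k H H).toLinearMap) (fun _ _ ↦ rfl)
    ((TensorProduct.comm k M N).trans (of _)) fun a b m n ↦ by
      simp [LinearEquiv.conj_apply_apply]

variable (Δ N) in
def shuffle (V : Type*) [AddCommGroup V] [Module k V] :
    DiagTensor Δ (H ⊗[k] V) N ≃ₗ[H] DiagTensor Δ H N ⊗[k] V :=
  linearEquivOfTmul
    (LinearMap.rTensorHom V ∘ₗ (of Δ).conj.toLinearMap ∘ₗ (tensorEndRep H N).toLinearMap)
    (fun h z ↦ by
      induction z using TensorProduct.induction_on with
      | zero => simp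
      | add z z' hz hz' => rw [smul_add, hz, hz', map_add]
      | tmul x v => rfl)
    ((TensorProduct.rightComm k H V N).trans ((of Δ).rTensor V)) fun a b x n ↦ by
      induction x using TensorProduct.induction_on with
      | zero => simp
      | add x x' hx hx' => simp only [smul_add, add_tmul, map_add, hx, hx']
      | tmul h v => simp [smul_tmul', LinearEquiv.conj_apply_apply]

variable (Δ N) in
def fusion : H ⊗[k] N →ₗ[H] DiagTensor Δ H N :=
  AlgebraTensorModule.lift (R := k) (M := H) (N := N) (P := DiagTensor Δ H N)
    (LinearMap.toSpanSingleton H _ ((of Δ).toLinearMap ∘ₗ TensorProduct.mk k H N 1))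

lemma fusion_tmul (a : H) (n : N) : fusion Δ N (a ⊗ₜ n) = a • of Δ (1 ⊗ₜ n) := by
  simp [fusion]

end DiagTensor

end Diagonal

section ActionMap

variable (k : Type*) [CommRing k] (H : Type*) [Ring H] [Algebra k H]
  (M : Type*) [AddCommGroup M] [Module k M] [Module H M] [IsScalarTower k H M]

def actionMap : H ⊗[k] M →ₗ[H] M :=
  AlgebraTensorModule.lift (R := k) (M := H) (N := M) (P := M)
    (LinearMap.toSpanSingleton H _ LinearMap.id)

lemma actionMap_surjective : Function.Surjective (actionMap k H M) :=
  fun m ↦ ⟨(1 : H) ⊗ₜ m, by simp [actionMap]⟩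

end ActionMap

namespace DiagTensor

section Field

variable {k : Type*} [Field k] {H : Type*} [Ring H] [Algebra k H] {Δ : H →ₐ[k] H ⊗[k] H}
  {M M' M'' N : Type*} [AddCommGroup M] [Module k M] [Module H M] [IsScalarTower k H M]
  [AddCommGroup M'] [Module k M'] [Module H M'] [IsScalarTower k H M']
  [AddCommGroup M''] [Module k M''] [Module H M''] [IsScalarTower k H M'']
  [AddCommGroup N] [Module k N] [Module H N] [IsScalarTower k H N]

theorem projective_induced (hN : Function.Bijective (fusion Δ N)) (V : Type*) [AddCommGroup V]
    [Module k V] : Module.Projective H (DiagTensor Δ (H ⊗[k] V) N) :=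
  .of_equiv ((AlgebraTensorModule.congr (.ofBijective (fusion Δ N) hN) (.refl k V)).trans
    (shuffle Δ N V).symm)

theorem projective (hN : Function.Bijective (fusion Δ N)) [Module.Projective H M] :
    Module.Projective H (DiagTensor Δ M N) := by
  obtain ⟨s, hs⟩ := Module.projective_lifting_property (actionMap k H M) LinearMap.id
    (actionMap_surjective k H M)
  have := projective_induced hN M
  exact .of_split (rTensor Δ N s) (rTensor Δ N (actionMap k H M))
    (by rw [← rTensor_comp, hs, rTensor_id])

lemma rTensor_surjective {f : M →ₗ[H] M'} (hf : Function.Surjective f) :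
    Function.Surjective (rTensor Δ N f) :=
  LinearMap.rTensor_surjective N (g := f.restrictScalars k) hf

lemma rTensor_injective {f : M →ₗ[H] M'} (hf : Function.Injective f) :
    Function.Injective (rTensor Δ N f) :=
  Module.Flat.rTensor_preserves_injective_linearMap (f.restrictScalars k) hf

lemma exact_rTensor {f : M →ₗ[H] M'} {g : M' →ₗ[H] M''} (hfg : Function.Exact f g)
    (hg : Function.Surjective g) : Function.Exact (rTensor Δ N f) (rTensor Δ N g) :=
  _root_.rTensor_exact N (f := f.restrictScalars k) (g := g.restrictScalars k) hfg hg

def kerEquiv (f : M →ₗ[H] M') (hf : Function.Surjective f) :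
    DiagTensor Δ (LinearMap.ker f) N ≃ₗ[H] LinearMap.ker (rTensor Δ N f) :=
  (LinearEquiv.ofInjective _ (rTensor_injective (LinearMap.ker f).injective_subtype)).trans
    (.ofEq _ _ (exact_rTensor (LinearMap.exact_subtype_ker_map f) hf).linearMap_ker_eq.symm)

end Field

section Dimension

variable {k : Type*} [Field k] {H : Type u} [Ring H] [Algebra k H] {Δ : H →ₐ[k] H ⊗[k] H}
  {N : Type u} [AddCommGroup N] [Module k N] [Module H N] [IsScalarTower k H N]

theorem projDimLE (hN : Function.Bijective (fusion Δ N)) {M : Type u} [AddCommGroup M]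
    [Module k M] [Module H M] [IsScalarTower k H M] {n : ℕ} (hM : ProjDimLE H n M) :
    ProjDimLE H n (DiagTensor Δ M N) := by
  induction n generalizing M with
  | zero =>
    have : Module.Projective H M := hM
    exact projective hN
  | succ n ih =>
    rcases hM with hM | ⟨P, f, hP, hf, hker⟩
    · have : Module.Projective H M := hM
      exact .inl (projective hN)
    · let : Module k P := .compHom P (algebraMap k H)
      have : IsScalarTower k H P := .of_compHom k H P
      exact .inr ⟨.of H (DiagTensor Δ P N), rTensor Δ N f, projective hN,
        rTensor_surjective hf, .of_linearEquiv (kerEquiv f hf) (ih hker)⟩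

theorem projDim_le (hN : Function.Bijective (fusion Δ N)) (M : Type u) [AddCommGroup M]
    [Module k M] [Module H M] [IsScalarTower k H M] :
    projDim H (DiagTensor Δ M N) ≤ projDim H M :=
  projDim_le_of_forall_projDimLE fun _ ↦ projDimLE hN

end Dimension

section Hopf

open HopfAlgebra

variable {k : Type*} [CommRing k] {H : Type*} [Ring H] [HopfAlgebra k H]
  {N : Type*} [AddCommGroup N] [Module k N] [Module H N] [IsScalarTower k H N]

lemma fusion_comul_apply (x : H ⊗[k] N) :
    fusion (Bialgebra.comulAlgHom k H) N x = of _ (twist N LinearMap.id x) := by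
  induction x using TensorProduct.induction_on with
  | zero => simp
  | add x y hx hy => simp [hx, hy]
  | tmul h n =>
    rw [fusion_tmul, smul_of, twist_tmul _ (ℛ k h)]
    simp [← (ℛ k h).eq, map_sum]

theorem bijective_fusion_comul : Function.Bijective (fusion (Bialgebra.comulAlgHom k H) N) := by
  have hid : IsUnit (toConv (LinearMap.id : H →ₗ[k] H)) :=
    ⟨⟨toConv LinearMap.id, toConv (antipode k), LinearMap.id_mul_antipode,
      LinearMap.antipode_mul_id⟩, rfl⟩
  convert (of (Bialgebra.comulAlgHom k H)).bijective.comp (bijective_twist (N := N) hid) using 1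
  exact funext fusion_comul_apply

lemma antipode_algebraMap (c : k) : antipode k (algebraMap k H c) = algebraMap k H c := by
  rw [Algebra.algebraMap_eq_smul_one, map_smul, antipode_one]

lemma sum_right_mul_antipode_symm (hS : Function.Bijective (antipode k (A := H))) {a : H}
    {ι : Type*} (r : Repr k a ι) :
    ∑ i ∈ r.index, r.right i * (LinearEquiv.ofBijective _ hS).symm (r.left i) =
      algebraMap k H (counit a) := by
  apply hS.injective
  simp [map_sum, antipode_mul_antidistrib, sum_mul_antipode_eq_algebraMap_counit,
    antipode_algebraMap]

lemma sum_antipode_symm_mul_left (hS : Function.Bijective (antipode k (A := H))) {a : H}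
    {ι : Type*} (r : Repr k a ι) :
    ∑ i ∈ r.index, (LinearEquiv.ofBijective _ hS).symm (r.right i) * r.left i =
      algebraMap k H (counit a) := by
  apply hS.injective
  simp [map_sum, antipode_mul_antidistrib, sum_antipode_mul_eq_algebraMap_counit,
    antipode_algebraMap]

theorem isUnit_toConv_unop (hS : Function.Bijective (antipode k (A := H))) :
    IsUnit (toConv (Cop.opEquiv k).symm.toLinearMap : WithConv (Cop H →ₗ[k] H)) := by
  refine ⟨⟨_, toConv ((LinearEquiv.ofBijective _ hS).symm.toLinearMap ∘ₗ
    (Cop.opEquiv k).symm.toLinearMap), ?_, ?_⟩, rfl⟩ <;>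
  · ext c
    obtain ⟨c, rfl⟩ := (Cop.opEquiv k).surjective c
    rw [(ℛ k c).cop.convMul_apply]
    simp [Repr.cop, Cop.counit_opEquiv, sum_right_mul_antipode_symm, sum_antipode_symm_mul_left]

lemma fusion_swapComul_apply (x : H ⊗[k] N) :
    fusion (swapComul (Bialgebra.comulAlgHom k H)) N x =
      of _ (((Cop.opEquiv k).rTensor N).symm
        (twist N (Cop.opEquiv k).symm.toLinearMap ((Cop.opEquiv k).rTensor N x))) := by
  induction x using TensorProduct.induction_on with
  | zero => simp
  | add x y hx hy => simp [hx, hy]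
  | tmul h n =>
    rw [fusion_tmul, smul_of, LinearEquiv.rTensor_tmul, twist_tmul _ (ℛ k h).cop]
    simp [← (ℛ k h).eq, map_sum, Repr.cop, swapComul]

theorem bijective_fusion_swapComul (hS : Function.Bijective (antipode k (A := H))) :
    Function.Bijective (fusion (swapComul (Bialgebra.comulAlgHom k H)) N) := by
  convert (of (swapComul (Bialgebra.comulAlgHom k H))).bijective.comp <|
    ((Cop.opEquiv k (C := H)).rTensor N).symm.bijective.comp <|
    (bijective_twist (N := N) (isUnit_toConv_unop hS)).comp
      ((Cop.opEquiv k).rTensor N).bijective using 1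
  exact funext fusion_swapComul_apply

end Hopf

end DiagTensor

end

theorem projDim_tensor_le_general (k : Type u) [Field k] (H : Type u) [Ring H] [HopfAlgebra k H]
    (M N : Type u)
    [AddCommGroup M] [Module k M] [Module H M] [IsScalarTower k H M]
    [AddCommGroup N] [Module k N] [Module H N] [IsScalarTower k H N] :
    @projDim H _ (M ⊗[k] N) _ (tensorModule k H M N) ≤ projDim H M ∧
    (Function.Bijective (HopfAlgebra.antipode (R := k) (A := H)) →
      @projDim H _ (M ⊗[k] N) _ (tensorModule k H M N) ≤ projDim H N) := by
  refine ⟨DiagTensor.projDim_le DiagTensor.bijective_fusion_comul M, fun hS ↦ ?_⟩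
  exact (projDim_congr (DiagTensor.comm (Bialgebra.comulAlgHom k H) M N)).trans_le
    (DiagTensor.projDim_le (DiagTensor.bijective_fusion_swapComul hS) N)

/-- Let `H` be a Hopf algebra over a field `k`. For left `H`-modules `M`, `N`,
with `M ⊗[k] N` carrying the diagonal `H`-action `h • (m ⊗ n) = ∑ h₁ m ⊗ h₂ n`, we have
`pd_H(M ⊗ N) ≤ pd_H(M)`; and if the antipode of `H` is bijective, also
`pd_H(M ⊗ N) ≤ pd_H(N)`. -/
theorem projDim_tensor_le (k : Type u) [Field k] (H : Type u) [Ring H] [HopfAlgebra k H]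
    (M N : Type u)
    [AddCommGroup M] [Module k M] [Module H M] [IsScalarTower k H M] [SMulCommClass k H M]
    [AddCommGroup N] [Module k N] [Module H N] [IsScalarTower k H N] [SMulCommClass k H N] :
    @projDim H _ (M ⊗[k] N) _ (tensorModule k H M N) ≤ projDim H M ∧
    (Function.Bijective (HopfAlgebra.antipode (R := k) (A := H)) →
      @projDim H _ (M ⊗[k] N) _ (tensorModule k H M N) ≤ projDim H N) :=
  projDim_tensor_le_general k H M N
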